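/- arXiv:2112.01446 — 2 statements merged into one kernel-verified Lean document; each statement's English description precedes it below -/
import Mathlib

section
/- For the 10-to-1 magic state distillation protocol with the [[10,1,2]] code, if the seven input |T⟩ states each have independent Z-error probability p and the input |CCZ⟩ state has the symmetric Z-error distribution with total error probability p (each of the 7 nontrivial Z^b errors occurring with probability p/7), then the probability of a trivial syndrome satisfies p_s = 1 − 8p + 29p² + O(p³). -/
/-!
The `[[10,1,2]]` code obtained by morphing the 15-qubit Reed–Muller code.
Its ten qubits are the seven "simplex" qubits, indexed by nonzero vectors
`v ∈ F₂³` (each holding a noisy `|T⟩` state), together with three "edge" qubits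
`1̄,2̄,3̄` (holding a noisy `|CCZ⟩` state).  Its three X-stabilizer generators are
`X` on `{v : v i = 1} ∪ {ī}` for `i = 1,2,3`.  A Z-error pattern consists of
`e : V3 → Bool` (Z errors on the `|T⟩` inputs) and `b : Fin 3 → ZMod 2`
(the error `Z^b` on the `|CCZ⟩` input).  The syndrome is trivial iff the total
Z-error commutes with all X-stabilizers.
-/

/-- Simplex qubit labels: nonzero vectors of `F₂³`. -/
abbrev V3 := {v : Fin 3 → ZMod 2 // v ≠ 0}

/-- Probability of the Z-error pattern `e` on the seven independent `|T⟩` states,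
each with Z-error probability `p`. -/
noncomputable def pT (p : ℝ) (e : V3 → Bool) : ℝ :=
  ∏ v : V3, if e v then p else 1 - p

/-- Probability of the error `Z^b` on the `|CCZ⟩` state: no error with
probability `1 - p`, each of the seven nontrivial `Z^b` with probability `p/7`. -/
noncomputable def pCCZ (p : ℝ) (b : Fin 3 → ZMod 2) : ℝ :=
  if b = 0 then 1 - p else p / 7

/-- The syndrome of the Z-error `(e, b)` is trivial: for each of the three
X-stabilizer generators (`X` on `{v : v i = 1} ∪ {ī}`), the overlap with the
Z-error is even. -/
def syndromeTrivial (e : V3 → Bool) (b : Fin 3 → ZMod 2) : Prop :=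
  ∀ i : Fin 3, (∑ v : V3, if v.1 i = 1 ∧ e v then (1 : ZMod 2) else 0) = b i

instance (e : V3 → Bool) (b : Fin 3 → ZMod 2) : Decidable (syndromeTrivial e b) := by
  unfold syndromeTrivial; infer_instance

/-- The probability that the 10-to-1 protocol succeeds (trivial syndrome). -/
noncomputable def pSucc (p : ℝ) : ℝ :=
  ∑ e : V3 → Bool, ∑ b : Fin 3 → ZMod 2,
    if syndromeTrivial e b then pT p e * pCCZ p b else 0

/-!
The syndrome of a `|T⟩` error pattern `e` is the sum `s(e)` of the simplex vectors it flips, and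
the syndrome is trivial exactly when the `|CCZ⟩` error is `s(e)`. Expanding the `|CCZ⟩`
distribution in the characters `b ↦ (-1)^(x ⬝ᵥ b)` of `F₂³` gives
`p_s = p/7 + (1 - 8p/7)/8 · ∑ₓ E[(-1)^(x ⬝ᵥ s(e))]`. By independence each expectation factors as
`∏ᵥ (1 - p + p (-1)^(x ⬝ᵥ v)) = (1 - 2p)^#{v | x ⬝ᵥ v = 1}`, and every nonzero functional is odd
on exactly four of the seven simplex vectors. Hence
`p_s = p/7 + (1 - 8p/7)(1 + 7(1 - 2p)⁴)/8 = 1 - 8p + 29p² - 52p³ + 46p⁴ - 16p⁵`.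
-/

open Finset Matrix

def signChar : AddChar (ZMod 2) ℝ where
  toFun a := (-1) ^ a.val
  map_zero_eq_one' := by simp
  map_add_eq_mul' a b := by rw [ZMod.val_add, ← neg_one_pow_eq_pow_mod_two, pow_add]

@[simp] lemma signChar_one : signChar 1 = -1 := by
  simp [signChar, ZMod.val_one]

lemma signChar_eq_one_iff : ∀ {a : ZMod 2}, signChar a = 1 ↔ a = 0
  | 0 => by simp
  | 1 => by norm_num [show (1 : ZMod 2) ≠ 0 by decide]

lemma AddChar.map_sum_eq_prod {ι A M : Type*} [AddCommMonoid A] [CommMonoid M]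
    (ψ : AddChar A M) (s : Finset ι) (f : ι → A) :
    ψ (∑ i ∈ s, f i) = ∏ i ∈ s, ψ (f i) := by
  induction s using Finset.cons_induction with
  | empty => simp
  | cons a s ha ih => rw [sum_cons, prod_cons, AddChar.map_add_eq_mul, ih]

section Fourier

variable {ι κ : Type*}

lemma sum_signChar_dotProduct [Fintype κ] [DecidableEq κ] (b : κ → ZMod 2) :
    ∑ x : κ → ZMod 2, signChar (x ⬝ᵥ b) = if b = 0 then 2 ^ Fintype.card κ else 0 := by
  set ψ := signChar.compAddMonoidHom (dotProductBilin (ZMod 2) (ZMod 2) b).toAddMonoidHom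
  have hψ : ψ = 0 ↔ b = 0 := by
    refine ⟨fun h => funext fun i => ?_, by rintro rfl; ext x; simp [ψ]⟩
    simpa [ψ, signChar_eq_one_iff] using DFunLike.congr_fun h (Pi.single i 1)
  calc ∑ x, signChar (x ⬝ᵥ b) = ∑ x, ψ x := by simp [ψ, dotProduct_comm]
    _ = _ := by simp [ψ.sum_eq_ite, hψ]

lemma sum_prod_ite_bool {R : Type*} [CommSemiring R] [Fintype ι] [DecidableEq ι] (a b : ι → R) :
    ∑ e : ι → Bool, ∏ i, (if e i then a i else b i) = ∏ i, (a i + b i) := by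
  calc _ = ∏ i, ∑ t : Bool, (if t then a i else b i) := (Fintype.prod_sum _).symm
    _ = _ := by simp

lemma sum_prod_bernoulli [Fintype ι] [DecidableEq ι] (p : ℝ) :
    ∑ e : ι → Bool, ∏ i, (if e i then p else 1 - p) = 1 := by
  simp [sum_prod_ite_bool]

lemma sum_prod_bernoulli_mul_signChar [Fintype ι] [DecidableEq ι] [Fintype κ] (p : ℝ)
    (v : ι → κ → ZMod 2) (x : κ → ZMod 2) :
    ∑ e : ι → Bool, (∏ i, if e i then p else 1 - p) * signChar (x ⬝ᵥ ∑ i, if e i then v i else 0)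
      = ∏ i, (1 - p + p * signChar (x ⬝ᵥ v i)) := by
  have h : ∀ e : ι → Bool,
      (∏ i, if e i then p else 1 - p) * signChar (x ⬝ᵥ ∑ i, if e i then v i else 0)
        = ∏ i, if e i then p * signChar (x ⬝ᵥ v i) else 1 - p := by
    intro e
    rw [dotProduct_sum, AddChar.map_sum_eq_prod, ← prod_mul_distrib]
    refine prod_congr rfl fun i _ => ?_
    cases e i <;> simp
  simp_rw [h, sum_prod_ite_bool, add_comm]

lemma one_sub_add_mul_signChar (p : ℝ) :
    ∀ a : ZMod 2, 1 - p + p * signChar a = if a = 1 then 1 - 2 * p else 1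
  | 0 => by simp
  | 1 => by simp; ring

lemma prod_one_sub_add_mul_signChar [Fintype ι] [Fintype κ] (p : ℝ) (v : ι → κ → ZMod 2)
    (x : κ → ZMod 2) :
    ∏ i, (1 - p + p * signChar (x ⬝ᵥ v i)) = (1 - 2 * p) ^ #{i | x ⬝ᵥ v i = 1} := by
  simp_rw [one_sub_add_mul_signChar]
  rw [prod_ite, prod_const, prod_const, one_pow, mul_one]

end Fourier

def syndrome (e : V3 → Bool) : Fin 3 → ZMod 2 := ∑ v, if e v then v.1 else 0

lemma syndromeTrivial_iff (e : V3 → Bool) (b : Fin 3 → ZMod 2) :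
    syndromeTrivial e b ↔ b = syndrome e := by
  suffices h : ∀ i, (∑ v : V3, if v.1 i = 1 ∧ e v then (1 : ZMod 2) else 0) = syndrome e i by
    simp only [syndromeTrivial, h, funext_iff]
    exact forall_congr' fun _ => eq_comm
  intro i
  rw [syndrome, Finset.sum_apply]
  refine sum_congr rfl fun v _ => ?_
  cases e v
  · simp
  · simpa using (by decide : ∀ a : ZMod 2, (if a = 1 then 1 else 0) = a) (v.1 i)

lemma pSucc_eq_sum_pCCZ_syndrome (p : ℝ) : pSucc p = ∑ e, pT p e * pCCZ p (syndrome e) := by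
  simp [pSucc, syndromeTrivial_iff]

-- `pCCZ p b = p/7 + (1 - 8p/7) 𝟙[b = 0]` and `𝟙[b = 0] = 2⁻³ ∑ₓ (-1)^(x ⬝ᵥ b)`
lemma pCCZ_eq (p : ℝ) (b : Fin 3 → ZMod 2) :
    pCCZ p b = p / 7 + (1 - 8 * p / 7) / 8 * ∑ x : Fin 3 → ZMod 2, signChar (x ⬝ᵥ b) := by
  rw [sum_signChar_dotProduct, pCCZ]
  split_ifs <;> norm_num
  ring

lemma card_simplex_dotProduct_eq_one (x : Fin 3 → ZMod 2) :
    #{v : V3 | x ⬝ᵥ v.1 = 1} = if x = 0 then 0 else 4 := by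
  revert x; decide

lemma sum_pT_mul_signChar_syndrome (p : ℝ) (x : Fin 3 → ZMod 2) :
    ∑ e, pT p e * signChar (x ⬝ᵥ syndrome e) = if x = 0 then 1 else (1 - 2 * p) ^ 4 := by
  simp only [pT, syndrome]
  rw [sum_prod_bernoulli_mul_signChar, prod_one_sub_add_mul_signChar,
    card_simplex_dotProduct_eq_one]
  split_ifs <;> simp

lemma pSucc_eq (p : ℝ) : pSucc p = p / 7 + (1 - 8 * p / 7) / 8 * (1 + 7 * (1 - 2 * p) ^ 4) := by
  have hsum : ∑ x : Fin 3 → ZMod 2, (if x = 0 then (1 : ℝ) else (1 - 2 * p) ^ 4)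
      = 1 + 7 * (1 - 2 * p) ^ 4 := by
    rw [sum_ite]; simp [filter_ne', filter_eq']
  calc pSucc p = ∑ e, pT p e * pCCZ p (syndrome e) := pSucc_eq_sum_pCCZ_syndrome p
    _ = p / 7 * ∑ e, pT p e
        + (1 - 8 * p / 7) / 8 * ∑ x : Fin 3 → ZMod 2, ∑ e, pT p e * signChar (x ⬝ᵥ syndrome e) := by
      simp_rw [pCCZ_eq, mul_add, sum_add_distrib, mul_sum, mul_left_comm (pT p _),
        mul_comm (pT p _)]
      rw [sum_comm]
    _ = _ := by simp_rw [sum_pT_mul_signChar_syndrome, hsum, pT, sum_prod_bernoulli, mul_one]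

/-- For the 10-to-1 magic state distillation protocol with the
`[[10,1,2]]` code, with seven `|T⟩` inputs of independent Z-error probability `p`
and one `|CCZ⟩` input with symmetric Z-error distribution of total probability
`p`, the probability of a trivial syndrome satisfies
`p_s = 1 − 8p + 29p² + O(p³)`. -/
theorem ten_to_one_success_probability :
    ∃ C : ℝ, 0 < C ∧ ∀ p : ℝ, 0 ≤ p → p ≤ 1 →
      |pSucc p - (1 - 8 * p + 29 * p ^ 2)| ≤ C * p ^ 3 := by
  refine ⟨52, by norm_num, fun p hp0 hp1 => ?_⟩
  have hcubic :
      pSucc p - (1 - 8 * p + 29 * p ^ 2) = -(p ^ 3 * (52 - 46 * p + 16 * p ^ 2)) := by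
    rw [pSucc_eq]; ring
  have hq0 : 0 ≤ 52 - 46 * p + 16 * p ^ 2 := by nlinarith
  have hq52 : 52 - 46 * p + 16 * p ^ 2 ≤ 52 := by nlinarith
  rw [hcubic, abs_neg, abs_of_nonneg (mul_nonneg (pow_nonneg hp0 3) hq0), mul_comm 52]
  exact mul_le_mul_of_nonneg_left hq52 (pow_nonneg hp0 3)
end

section
/- In a ball code on a d-dimensional colorable ball B^v, for every edge e ∈ B^v_1 the operator X(e) = ∏_{δ ⊇ e} X_δ commutes with every Z-stabilizer Z(μ), μ ∈ B^v_{d−2}, and is not in the stabilizer group; hence it is a nontrivial logical X operator. -/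
/-!
Combinatorial framework for colorable balls in `d`-colexes.

A `d`-colex is a pure `d`-dimensional simplicial complex (faces are finsets of
vertices) whose vertices admit a proper `(d+1)`-coloring.  A colorable `d`-ball
`B^v` consists of the vertex `v` together with all simplices containing it; its
boundary `∂B^v` consists of the simplices contained in a top simplex of `B^v`
but not containing `v`.  We encode `B^v ∪ ∂B^v` as a `Ball`: a colex in which
every face is contained in a `d`-simplex containing the distinguished vertex.

The associated ball code is the CSS code with a qubit on each `d`-simplex of
`B^v`, one X-stabilizer `X(v)` acting on all qubits, and a Z-stabilizer `Z(μ)`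
for each `(d−2)`-simplex `μ ∈ B^v_{d−2}` acting on the `d`-simplices
containing `μ`.
-/

/-- A `d`-dimensional simplicial complex with properly `(d+1)`-colored
vertices. -/
structure DColex (V : Type*) [DecidableEq V] (d : ℕ) where
  faces : Finset (Finset V)
  nonempty_of_mem : ∀ f ∈ faces, f.Nonempty
  down_closed : ∀ f ∈ faces, ∀ g, g ⊆ f → g.Nonempty → g ∈ faces
  card_le : ∀ f ∈ faces, f.card ≤ d + 1
  col : V → Fin (d + 1)
  proper : ∀ f ∈ faces, ∀ u ∈ f, ∀ w ∈ f, u ≠ w → col u ≠ col w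

/-- A colorable `d`-ball `B^v` together with its boundary: a colex with a
distinguished vertex `v` such that every face is contained in some `d`-simplex
containing `v`. -/
structure Ball (V : Type*) [DecidableEq V] (d : ℕ) extends toColex : DColex V d where
  v : V
  v_mem : ({v} : Finset V) ∈ faces
  subset_top : ∀ f ∈ faces, ∃ δ ∈ faces, f ⊆ δ ∧ δ.card = d + 1 ∧ v ∈ δ

namespace Ball

variable {V : Type*} [DecidableEq V] [Fintype V] {d : ℕ}

/-- `B^v_k`: the `k`-simplices of the ball (those containing `v`). -/
def Bk (B : Ball V d) (k : ℕ) : Finset (Finset V) :=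
  B.faces.filter fun f => B.v ∈ f ∧ f.card = k + 1

/-- `∂B^v_k`: the `k`-simplices of the boundary (those not containing `v`). -/
def bdryk (B : Ball V d) (k : ℕ) : Finset (Finset V) :=
  B.faces.filter fun f => B.v ∉ f ∧ f.card = k + 1

/-- The Z-check matrix of the ball code: rows indexed by `(d−2)`-simplices
`μ ∈ B^v_{d−2}`, columns by qubits (`d`-simplices of `B^v`); the entry is `1`
iff `μ ⊆ δ`. -/
def Zmat (B : Ball V d) :
    Matrix {μ // μ ∈ B.Bk (d - 2)} {δ // δ ∈ B.Bk d} (ZMod 2) :=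
  fun μ δ => if μ.1 ⊆ δ.1 then 1 else 0

/-- The (Z-part of the) logical operator `X(e)` associated with an edge
`e ∈ B^v_1`: the indicator vector of the `d`-simplices containing `e`. -/
def xe (B : Ball V d) (e : Finset V) : {δ // δ ∈ B.Bk d} → ZMod 2 :=
  fun δ => if e ⊆ δ.1 then 1 else 0

/-- The weight-two operator `Z(λ)` associated with `λ ∈ B^v_{d−1}`: the
indicator vector of the `d`-simplices containing `λ`. -/
def zlam (B : Ball V d) (lam : Finset V) : {δ // δ ∈ B.Bk d} → ZMod 2 :=
  fun δ => if lam ⊆ δ.1 then 1 else 0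

/-- A Pauli with X-part `a` and Z-part `b` commutes with all stabilizers of the
ball code: `a` is orthogonal to every Z-check row and `b` is orthogonal to the
single all-ones X-check `X(v)`. -/
def InCentralizer (B : Ball V d) (a b : {δ // δ ∈ B.Bk d} → ZMod 2) : Prop :=
  (Zmat B).mulVec a = 0 ∧ (∑ δ, b δ) = 0

/-- A Pauli with X-part `a` and Z-part `b` lies in the stabilizer group of the
ball code: `a` is in the span of the all-ones vector (the X-check `X(v)`) and
`b` is in the span of the Z-check rows. -/
def InStabilizer (B : Ball V d) (a b : {δ // δ ∈ B.Bk d} → ZMod 2) : Prop :=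
  a ∈ Submodule.span (ZMod 2)
        ({fun _ => (1 : ZMod 2)} : Set ({δ // δ ∈ B.Bk d} → ZMod 2)) ∧
  b ∈ Submodule.span (ZMod 2) (Set.range fun μ => (Zmat B) μ)

/-- The weight of a Pauli with X-part `a` and Z-part `b`. -/
def wt (B : Ball V d) (a b : {δ // δ ∈ B.Bk d} → ZMod 2) : ℕ :=
  (Finset.univ.filter fun δ => a δ ≠ 0 ∨ b δ ≠ 0).card

/-- The ball code has distance exactly `2`. -/
def DistanceTwo (B : Ball V d) : Prop :=
  (∀ a b, InCentralizer B a b → ¬ InStabilizer B a b → 2 ≤ wt B a b) ∧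
  (∃ a b, InCentralizer B a b ∧ ¬ InStabilizer B a b ∧ wt B a b = 2)

/-- Each `(d−1)`-simplex of `B^v` lies in exactly two `d`-simplices. -/
def TwoSided (B : Ball V d) : Prop :=
  ∀ lam ∈ B.Bk (d - 1), ((B.Bk d).filter fun δ => lam ⊆ δ).card = 2

/-- The Even Support property: the number of `d`-simplices of `B^v` containing
any given simplex of `B^v` of dimension `< d` is even. -/
def EvenSupport (B : Ball V d) : Prop :=
  ∀ f ∈ B.faces, B.v ∈ f → f.card ≤ d →
    Even (((B.Bk d).filter fun δ => f ⊆ δ).card)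

end Ball

open Ball

/-! The Z-checks `Z(μ)` and `X(e)` overlap on the `d`-simplices containing `μ ∪ e`, which has at
most `d` vertices since `μ` and `e` share `v`; Even Support makes that overlap even. If
`X(e)` were the all-ones `X(v)` (or trivial), it would be constant; but flipping a `d`-simplex
`δ ⊇ e` across its facet opposite the second vertex `u` of `e` gives, by two-sidedness, a
`d`-simplex without `u`, where `X(e)` vanishes. -/

theorem Submodule.eq_of_mem_span_const_one {R ι : Type*} [Semiring R] {f : ι → R}
    (hf : f ∈ Submodule.span R {fun _ => (1 : R)}) (i j : ι) : f i = f j := by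
  obtain ⟨c, rfl⟩ := Submodule.mem_span_singleton.mp hf
  rfl

namespace Ball

variable {V : Type*} [DecidableEq V] {d : ℕ} (B : Ball V d)

theorem mem_Bk_iff {k : ℕ} {f : Finset V} :
    f ∈ B.Bk k ↔ f ∈ B.faces ∧ B.v ∈ f ∧ f.card = k + 1 :=
  Finset.mem_filter

theorem mulVec_xe_apply (e : Finset V) (μ : {μ // μ ∈ B.Bk (d - 2)}) :
    (Zmat B).mulVec (xe B e) μ = (((B.Bk d).filter fun δ => μ.1 ∪ e ⊆ δ).card : ZMod 2) := by
  rw [← Finset.sum_boole, ← Finset.sum_coe_sort]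
  refine Finset.sum_congr rfl fun δ _ => ?_
  simp only [Zmat, xe, Finset.union_subset_iff, ite_zero_mul_ite_zero, mul_one]

theorem EvenSupport.even_card_superset {B : Ball V d} (hES : B.EvenSupport) {f : Finset V}
    (hv : B.v ∈ f) (hcard : f.card ≤ d) :
    Even ((B.Bk d).filter fun δ => f ⊆ δ).card := by
  rcases Finset.eq_empty_or_nonempty ((B.Bk d).filter fun δ => f ⊆ δ) with h | ⟨δ, hδ⟩
  · simp [h]
  obtain ⟨hδB, hfδ⟩ := Finset.mem_filter.mp hδ
  exact hES f (B.down_closed δ ((B.mem_Bk_iff).mp hδB).1 f hfδ ⟨B.v, hv⟩) hv hcard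

theorem card_union_le_of_mem_Bk {j k : ℕ} {f g : Finset V} (hf : f ∈ B.Bk j)
    (hg : g ∈ B.Bk k) : (f ∪ g).card ≤ j + k + 1 := by
  obtain ⟨-, hvf, hf⟩ := (B.mem_Bk_iff).mp hf
  obtain ⟨-, hvg, hg⟩ := (B.mem_Bk_iff).mp hg
  have hinter : 1 ≤ (f ∩ g).card :=
    Finset.card_pos.mpr ⟨B.v, Finset.mem_inter.mpr ⟨hvf, hvg⟩⟩
  have := Finset.card_union_add_card_inter f g
  omega

theorem exists_mem_Bk_superset {f : Finset V} (hf : f ∈ B.faces) : ∃ δ ∈ B.Bk d, f ⊆ δ := by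
  obtain ⟨δ, hδ, hfδ, hcard, hv⟩ := B.subset_top f hf
  exact ⟨δ, (B.mem_Bk_iff).mpr ⟨hδ, hv, hcard⟩, hfδ⟩

theorem TwoSided.exists_mem_Bk_not_mem {B : Ball V d} (h2 : B.TwoSided) {δ : Finset V}
    (hδ : δ ∈ B.Bk d) {u : V} (hu : u ∈ δ) (huv : u ≠ B.v) : ∃ δ' ∈ B.Bk d, u ∉ δ' := by
  obtain ⟨hδf, hvδ, hcard⟩ := (B.mem_Bk_iff).mp hδ
  set lam := δ.erase u
  have hvlam : B.v ∈ lam := Finset.mem_erase.mpr ⟨huv.symm, hvδ⟩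
  have hd : 1 ≤ d := by
    have := Finset.card_le_card (Finset.insert_subset hu (Finset.singleton_subset_iff.mpr hvδ))
    rw [Finset.card_pair huv] at this
    omega
  have hlam : lam ∈ B.Bk (d - 1) := by
    refine (B.mem_Bk_iff).mpr ⟨B.down_closed δ hδf lam (Finset.erase_subset u δ) ⟨B.v, hvlam⟩,
      hvlam, ?_⟩
    rw [Finset.card_erase_of_mem hu]
    omega
  obtain ⟨δ', hδ', hne⟩ := Finset.exists_mem_ne (s := (B.Bk d).filter fun δ' => lam ⊆ δ')
    (by rw [h2 lam hlam]; norm_num) δ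
  obtain ⟨hδ'B, hlamδ'⟩ := Finset.mem_filter.mp hδ'
  refine ⟨δ', hδ'B, fun huδ' => hne (Finset.eq_of_subset_of_card_le ?_ ?_).symm⟩
  · rw [← Finset.insert_erase hu]
    exact Finset.insert_subset huδ' hlamδ'
  · rw [hcard, ((B.mem_Bk_iff).mp hδ'B).2.2]

theorem EvenSupport.mulVec_xe_eq_zero (hd : 2 ≤ d) {B : Ball V d} (hES : B.EvenSupport)
    {e : Finset V} (he : e ∈ B.Bk 1) : (Zmat B).mulVec (xe B e) = 0 := by
  funext μ
  have hcard := B.card_union_le_of_mem_Bk μ.2 he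
  have hv : B.v ∈ μ.1 ∪ e := Finset.mem_union_left e ((B.mem_Bk_iff).mp μ.2).2.1
  rw [B.mulVec_xe_apply, Pi.zero_apply, ZMod.natCast_eq_zero_iff_even]
  exact hES.even_card_superset hv (by omega)

theorem xe_not_mem_span_const_one (h2 : B.TwoSided) {e : Finset V} (he : e ∈ B.Bk 1) :
    xe B e ∉ Submodule.span (ZMod 2)
      ({fun _ => (1 : ZMod 2)} : Set ({δ // δ ∈ B.Bk d} → ZMod 2)) := by
  obtain ⟨hef, -, hcard⟩ := (B.mem_Bk_iff).mp he
  obtain ⟨u, hue, huv⟩ := Finset.exists_mem_ne (by omega : 1 < e.card) B.v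
  obtain ⟨δ, hδ, heδ⟩ := B.exists_mem_Bk_superset hef
  obtain ⟨δ', hδ', huδ'⟩ := h2.exists_mem_Bk_not_mem hδ (heδ hue) huv
  have heδ' : ¬ e ⊆ δ' := fun h => huδ' (h hue)
  intro hspan
  have := Submodule.eq_of_mem_span_const_one hspan ⟨δ, hδ⟩ ⟨δ', hδ'⟩
  simp [xe, heδ, heδ'] at this

end Ball

theorem ball_code_logical_X_general {V : Type*} [DecidableEq V] {d : ℕ}
    (hd : 2 ≤ d) (B : Ball V d)
    (h2 : B.TwoSided) (hES : B.EvenSupport)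
    (e : Finset V) (he : e ∈ B.Bk 1) :
    (Zmat B).mulVec (xe B e) = 0 ∧
    xe B e ∉ Submodule.span (ZMod 2)
      ({fun _ => (1 : ZMod 2)} : Set ({δ // δ ∈ B.Bk d} → ZMod 2)) :=
  ⟨hES.mulVec_xe_eq_zero hd he, B.xe_not_mem_span_const_one h2 he⟩

/-- In a ball code on a `d`-dimensional colorable ball `B^v`,
for every edge `e ∈ B^v_1` the operator `X(e) = ∏_{δ ⊇ e} X_δ` commutes with
every Z-stabilizer `Z(μ)`, `μ ∈ B^v_{d−2}` (its X-part is annihilated by the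
Z-check matrix), and it is not in the stabilizer group (whose X-parts are
spanned by the all-ones vector `X(v)`); hence it is a nontrivial logical X
operator. -/
theorem ball_code_logical_X {V : Type*} [DecidableEq V] [Fintype V] {d : ℕ}
    (hd : 2 ≤ d) (B : Ball V d)
    (h2 : B.TwoSided) (hES : B.EvenSupport)
    (e : Finset V) (he : e ∈ B.Bk 1) :
    (Zmat B).mulVec (xe B e) = 0 ∧
    xe B e ∉ Submodule.span (ZMod 2)
      ({fun _ => (1 : ZMod 2)} : Set ({δ // δ ∈ B.Bk d} → ZMod 2)) :=
  ball_code_logical_X_general hd B h2 hES e he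
end
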